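/- arXiv:1907.06264 — 5 statements merged into one kernel-verified Lean document; each statement's English description precedes it below -/
import Mathlib

section
/- If η is a mean-payoff progress measure on a finite weighted game graph, then every position with non-maximal (finite) measure is winning for the minimizer player ⊟ for the mean-payoff objective with threshold 0; i.e., the set of positions p with η(p) ≠ ∞ is contained in the winning region of player ⊟. -/
open Filter

/-- A mean-payoff game: finite-ish directed graph without sinks, positions
partitioned between maximizer (⊕, `isMax`) and minimizer (⊟), integer weights. -/
structure MPG (V : Type*) where
  isMax : V → Prop
  E : V → V → Prop
  w : V → ℤ
  noSink : ∀ v, ∃ u, E v u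

variable {V : Type*}

/-- The stretch operation `η + p := max {0, η + w(p)}` on `ℕ∞`. -/
noncomputable def stretch (η : ℕ∞) (z : ℤ) : ℕ∞ :=
  if η = ⊤ then ⊤ else (((η.toNat : ℤ) + z).toNat : ℕ)

def MPG.IsPlay (G : MPG V) (π : ℕ → V) : Prop := ∀ i, G.E (π i) (π (i + 1))

/-- Player ⊟ wins the threshold-0 mean-payoff game from `p` (via a positional strategy). -/
def MPG.MinWins (G : MPG V) (p : V) : Prop :=
  ∃ σ : V → V, (∀ v, ¬ G.isMax v → G.E v (σ v)) ∧
    ∀ π : ℕ → V, π 0 = p → G.IsPlay π →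
      (∀ i, ¬ G.isMax (π i) → π (i + 1) = σ (π i)) →
      Filter.liminf (fun i : ℕ => ((∑ j ∈ Finset.range i, G.w (π j) : ℤ) : ℝ) / i) atTop ≤ 0

/-- Player ⊕ wins the threshold-0 mean-payoff game from `p` (via a positional strategy). -/
def MPG.MaxWins (G : MPG V) (p : V) : Prop :=
  ∃ σ : V → V, (∀ v, G.isMax v → G.E v (σ v)) ∧
    ∀ π : ℕ → V, π 0 = p → G.IsPlay π →
      (∀ i, G.isMax (π i) → π (i + 1) = σ (π i)) →
      0 < Filter.liminf (fun i : ℕ => ((∑ j ∈ Finset.range i, G.w (π j) : ℤ) : ℝ) / i) atTop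

def MPG.IsProgressMeasure (G : MPG V) (μ : V → ℕ∞) : Prop :=
  (∀ p, G.isMax p → ∀ u, G.E p u → stretch (μ u) (G.w p) ≤ μ p) ∧
  (∀ p, ¬ G.isMax p → ∃ u, G.E p u ∧ stretch (μ u) (G.w p) ≤ μ p)

def MPG.IsMaxStratOn (G : MPG V) (Q : Set V) (σ : V → V) : Prop :=
  ∀ p ∈ Q, G.isMax p → G.E p (σ p)

def MPG.IsMinStratOn (G : MPG V) (Q : Set V) (σ : V → V) : Prop :=
  ∀ p ∈ Q, ¬ G.isMax p → G.E p (σ p)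

open Classical in
/-- The (deterministic) successor induced by a pair of positional strategies. -/
noncomputable def MPG.step (G : MPG V) (σp σm : V → V) (v : V) : V :=
  if G.isMax v then σp v else σm v

/-- `Q` is a weak quasi ⊕-dominion with ⊕-witness `σp`: every *infinite* induced
play inside `Q` has strictly positive total weight (eventually positive partial sums). -/
def MPG.IsWeakQuasiDominion (G : MPG V) (Q : Set V) (σp : V → V) : Prop :=
  G.IsMaxStratOn Q σp ∧
  ∀ σm : V → V, G.IsMinStratOn Q σm → ∀ p ∈ Q,
    (∀ i, (G.step σp σm)^[i] p ∈ Q) →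
    ∃ N, ∀ n ≥ N, 0 < ∑ i ∈ Finset.range n, G.w ((G.step σp σm)^[i] p)

/-- `Q` is a quasi ⊕-dominion with ⊕-witness `σp`: every maximal induced play
inside `Q` (finite plays are truncated at the first exit from `Q`) has
strictly positive total weight. -/
def MPG.IsQuasiDominion (G : MPG V) (Q : Set V) (σp : V → V) : Prop :=
  G.IsMaxStratOn Q σp ∧
  ∀ σm : V → V, G.IsMinStratOn Q σm → ∀ p ∈ Q,
    ((∀ i, (G.step σp σm)^[i] p ∈ Q) →
      ∃ N, ∀ n ≥ N, 0 < ∑ i ∈ Finset.range n, G.w ((G.step σp σm)^[i] p)) ∧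
    ∀ n : ℕ, (∀ i < n, (G.step σp σm)^[i] p ∈ Q) → (G.step σp σm)^[n] p ∉ Q →
      0 < ∑ i ∈ Finset.range n, G.w ((G.step σp σm)^[i] p)

/-- The quasi dominion induced by a measure function: positions of positive measure. -/
def Qset (μ : V → ℕ∞) : Set V := {p | 0 < μ p}

/-- A quasi-dominion representation `(μ, σ)`. -/
structure MPG.IsQDR (G : MPG V) (μ : V → ℕ∞) (σ : V → V) : Prop where
  witness : G.IsQuasiDominion (Qset μ) σ
  dom : ∀ p, μ p = ⊤ → G.MaxWins p
  plr : ∀ p ∈ Qset μ, G.isMax p → μ p ≤ stretch (μ (σ p)) (G.w p)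
  opp : ∀ p ∈ Qset μ, ¬ G.isMax p → ∀ u, G.E p u → μ p ≤ stretch (μ u) (G.w p)

/-- The escape set of `Q` relative to the representation `(μ, σ)`. -/
def MPG.esc (G : MPG V) (μ : V → ℕ∞) (σ : V → V) (Q : Set V) : Set V :=
  {p | p ∈ Q ∧
    ((¬ G.isMax p ∧ ∃ u, G.E p u ∧ u ∉ Q) ∨
     (G.isMax p ∧ σ p ∉ Q ∧ ∀ u, G.E p u → u ∈ Q → stretch (μ u) (G.w p) ≤ μ p))}

/-- Embedding of `ℕ∞` into `WithTop ℤ`. -/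
noncomputable def toWZ (η : ℕ∞) : WithTop ℤ :=
  if η = ⊤ then ⊤ else ((η.toNat : ℤ) : WithTop ℤ)

open Classical in
/-- The lift operator on measure functions. -/
noncomputable def MPG.lift (G : MPG V) (μ : V → ℕ∞) (p : V) : ℕ∞ :=
  if G.isMax p then ⨆ u ∈ {u | G.E p u}, stretch (μ u) (G.w p)
  else ⨅ u ∈ {u | G.E p u}, stretch (μ u) (G.w p)

/-- a progress measure witnesses that every position with
non-maximal measure is won by the minimizer ⊟. -/
theorem progress_measure_sound {V : Type*} [Fintype V] (G : MPG V) (μ : V → ℕ∞)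
    (h : G.IsProgressMeasure μ) :
    ∀ p : V, μ p ≠ ⊤ → G.MinWins p := by
  classical
  intro p hp
  refine ⟨fun v => if hv : G.isMax v then Classical.choose (G.noSink v)
      else Classical.choose (h.2 v hv), ?_, ?_⟩
  · intro v hv
    simp only [dif_neg hv]
    exact (Classical.choose_spec (h.2 v hv)).1
  · intro π hπ0 hplay hfollow
    -- Key invariant: measures stay finite and partial sums are bounded.
    have key : ∀ j, μ (π j) ≠ ⊤ ∧
        (∑ i ∈ Finset.range j, G.w (π i)) + ((μ (π j)).toNat : ℤ) ≤ ((μ p).toNat : ℤ) := by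
      intro j
      induction j with
      | zero => simpa [hπ0] using hp
      | succ j ih =>
        obtain ⟨hfin, hsum⟩ := ih
        have hstep : stretch (μ (π (j+1))) (G.w (π j)) ≤ μ (π j) := by
          by_cases hm : G.isMax (π j)
          · exact h.1 (π j) hm _ (hplay j)
          · have hf := hfollow j hm
            rw [hf]
            simp only [dif_neg hm]
            exact (Classical.choose_spec (h.2 (π j) hm)).2
        have hfin' : μ (π (j+1)) ≠ ⊤ := by
          intro htop
          rw [stretch, if_pos htop] at hstep
          exact hfin (top_le_iff.mp hstep)
        rw [stretch, if_neg hfin'] at hstep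
        refine ⟨hfin', ?_⟩
        have hnat : ((((μ (π (j+1))).toNat : ℤ) + G.w (π j)).toNat : ℕ∞).toNat
            ≤ (μ (π j)).toNat := ENat.toNat_le_toNat hstep hfin
        rw [ENat.toNat_coe] at hnat
        have hint : ((μ (π (j+1))).toNat : ℤ) + G.w (π j) ≤ ((μ (π j)).toNat : ℤ) :=
          Int.toNat_le.mp hnat
        rw [Finset.sum_range_succ]
        omega
    have hS : ∀ n, (∑ i ∈ Finset.range n, G.w (π i)) ≤ ((μ p).toNat : ℤ) := by
      intro n
      have := (key n).2
      omega
    set C : ℝ := ((μ p).toNat : ℝ) with hC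
    have hC0 : 0 ≤ C := by positivity
    -- lower bound
    have hne : Nonempty V := ⟨p⟩
    set B : ℤ := Finset.univ.sup' Finset.univ_nonempty (fun v => |G.w v|) with hB
    have hBv : ∀ v, -B ≤ G.w v := by
      intro v
      have h1 := Finset.le_sup' (fun v => |G.w v|) (Finset.mem_univ v)
      have h2 := neg_abs_le (G.w v)
      simp only [hB]
      linarith
    have hB0 : (0 : ℤ) ≤ B := by
      have h1 := Finset.le_sup' (fun v => |G.w v|) (Finset.mem_univ p)
      have h2 := abs_nonneg (G.w p)
      simp only [hB]
      linarith
    have hlow : ∀ n : ℕ, (-B : ℝ) ≤ ((∑ j ∈ Finset.range n, G.w (π j) : ℤ) : ℝ) / n := by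
      intro n
      rcases Nat.eq_zero_or_pos n with hn | hn
      · subst hn
        simp
        exact_mod_cast hB0
      · rw [le_div_iff₀ (by positivity)]
        have : (n : ℤ) * (-B) ≤ ∑ j ∈ Finset.range n, G.w (π j) := by
          calc (n : ℤ) * (-B) = ∑ _j ∈ Finset.range n, (-B) := by
                rw [Finset.sum_const, Finset.card_range]; ring
            _ ≤ _ := Finset.sum_le_sum fun j _ => hBv (π j)
        calc (-B : ℝ) * n = ((n : ℤ) * (-B) : ℤ) := by push_cast; ring
          _ ≤ _ := by exact_mod_cast this
    have hbdd : IsBoundedUnder (· ≥ ·) atTop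
        (fun i : ℕ => ((∑ j ∈ Finset.range i, G.w (π j) : ℤ) : ℝ) / i) :=
      Filter.isBoundedUnder_of ⟨(-B : ℝ), fun n => hlow n⟩
    have hg : Tendsto (fun n : ℕ => C / n) atTop (nhds 0) :=
      tendsto_const_div_atTop_nhds_zero_nat C
    have hle : (fun i : ℕ => ((∑ j ∈ Finset.range i, G.w (π j) : ℤ) : ℝ) / i)
        ≤ᶠ[atTop] fun n : ℕ => C / n := by
      filter_upwards [eventually_ge_atTop 1] with n hn
      gcongr
      rw [hC]
      exact_mod_cast hS n
    calc Filter.liminf (fun i : ℕ => ((∑ j ∈ Finset.range i, G.w (π j) : ℤ) : ℝ) / i) atTop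
        ≤ Filter.liminf (fun n : ℕ => C / n) atTop :=
          liminf_le_liminf hle hbdd hg.isBoundedUnder_le.isCoboundedUnder_ge
      _ = 0 := hg.liminf_eq
end

section
/- Let μ be a progress measure and σ⊟ a ⊟-strategy such that for every ⊟-position p with μ(p) ≠ ∞ one has μ(σ⊟(p)) + p ≤ μ(p). Then for every play π consistent with σ⊟ starting from a position with finite measure, every simple cycle occurring in π has non-positive total weight. -/
open Filter

variable {V : Type*}

/-- along any play consistent with a progress-respecting
⊟-strategy from a finite-measure position, every simple cycle has
non-positive total weight. -/
theorem simple_cycles_nonpositive {V : Type*} (G : MPG V) (μ : V → ℕ∞) (σm : V → V)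
    (hpm : G.IsProgressMeasure μ)
    (hstrat : ∀ v, ¬ G.isMax v → G.E v (σm v))
    (hprog : ∀ p, ¬ G.isMax p → μ p ≠ ⊤ → stretch (μ (σm p)) (G.w p) ≤ μ p)
    (π : ℕ → V) (hplay : G.IsPlay π)
    (hcons : ∀ i, ¬ G.isMax (π i) → π (i + 1) = σm (π i))
    (hfin : μ (π 0) ≠ ⊤)
    (h k : ℕ) (hk : 0 < k) (hcyc : π h = π (h + k))
    (hsimple : ∀ i ∈ Finset.Ico h (h + k), ∀ j ∈ Finset.Ico h (h + k),
      i ≠ j → π i ≠ π j) :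
    ∑ i ∈ Finset.Ico h (h + k), G.w (π i) ≤ 0 := by
  -- step inequality at any position with finite measure
  have key : ∀ i, μ (π i) ≠ ⊤ → stretch (μ (π (i+1))) (G.w (π i)) ≤ μ (π i) := by
    intro i hi
    by_cases hm : G.isMax (π i)
    · exact hpm.1 (π i) hm (π (i+1)) (hplay i)
    · rw [hcons i hm]; exact hprog (π i) hm hi
  have hfinall : ∀ i, μ (π i) ≠ ⊤ := by
    intro i
    induction i with
    | zero => exact hfin
    | succ n ih =>
      have hs := key n ih
      intro htop
      rw [stretch, if_pos htop] at hs
      exact ih (top_le_iff.mp (le_trans hs le_rfl))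
  -- integer-valued measure along the play
  set f : ℕ → ℤ := fun i => ((μ (π i)).toNat : ℤ) with hf
  have hstep : ∀ i, f (i+1) + G.w (π i) ≤ f i := by
    intro i
    have hs := key i (hfinall i)
    rw [stretch, if_neg (hfinall (i+1))] at hs
    have h1 : ((((μ (π (i+1))).toNat : ℤ) + G.w (π i)).toNat : ℕ∞) ≤ (((μ (π i)).toNat : ℕ) : ℕ∞) := by
      rwa [ENat.coe_toNat (hfinall i)]
    have h2 : (((μ (π (i+1))).toNat : ℤ) + G.w (π i)).toNat ≤ (μ (π i)).toNat := by
      exact_mod_cast h1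
    calc f (i+1) + G.w (π i) ≤ ((((μ (π (i+1))).toNat : ℤ) + G.w (π i)).toNat : ℤ) :=
          Int.self_le_toNat _
      _ ≤ f i := by simp only [hf]; exact_mod_cast h2
  have tele : ∀ n, ∑ i ∈ Finset.Ico h (h + n), G.w (π i) ≤ f h - f (h + n) := by
    intro n
    induction n with
    | zero => simp
    | succ m ih =>
      rw [show h + (m + 1) = h + m + 1 from rfl,
        Finset.sum_Ico_succ_top (Nat.le_add_right h m)]
      have := hstep (h + m)
      omega
  have := tele k
  have hfk : f (h + k) = f h := by rw [hf]; simp [hcyc]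
  omega
end

section
/- If Q is a weak quasi ⊕-dominion with ⊕-witness σ⊕ such that Q is closed under σ⊕ (every ⊕-position p in Q has σ⊕(p) ∈ Q, and every ⊟-position in Q has all successors in Q), then Q is a ⊕-dominion: player ⊕ wins the mean-payoff game (threshold 0) from every position of Q. -/
open Filter

variable {V : Type*}

section AuxWQD

variable {V : Type*} (G : MPG V) (Q : Set V) (σp : V → V)

/-- A finite σp-consistent walk of length `n` staying in `Q`. -/
def GoodSeg (c : ℕ → V) (n : ℕ) : Prop :=
  (∀ i, i ≤ n → c i ∈ Q) ∧ (∀ i, i < n → G.E (c i) (c (i+1))) ∧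
  (∀ i, i < n → G.isMax (c i) → c (i+1) = σp (c i))

lemma aux_periodic_sum (f : ℕ → ℤ) (n : ℕ) (hn : 0 < n) :
    ∀ k, ∑ i ∈ Finset.range (k*n), f (i % n) = k * ∑ i ∈ Finset.range n, f i := by
  intro k
  induction k with
  | zero => simp
  | succ k ih =>
    have hkn : (k+1)*n = k*n + n := by ring
    rw [hkn, Finset.sum_range_add, ih]
    have hcongr : ∀ i ∈ Finset.range n, f ((k*n + i) % n) = f i := by
      intro i hi
      rw [Finset.mem_range] at hi
      congr 1
      rw [Nat.add_comm, Nat.mul_comm k n, Nat.add_mul_mod_self_left, Nat.mod_eq_of_lt hi]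
    rw [Finset.sum_congr rfl hcongr]
    push_cast
    ring

lemma aux_seg_good {c : ℕ → V} {n i j : ℕ} (hij : i < j) (hjn : j ≤ n)
    (hc : GoodSeg G Q σp c n) : GoodSeg G Q σp (fun k => c (i+k)) (j-i) := by
  refine ⟨fun k hk => hc.1 (i+k) (by omega), fun k hk => ?_, fun k hk hm => ?_⟩
  · show G.E (c (i+k)) (c (i+(k+1)))
    have h2 : i + (k+1) = (i+k) + 1 := by omega
    rw [h2]
    exact hc.2.1 (i+k) (by omega)
  · show c (i+(k+1)) = σp (c (i+k))
    have h2 : i + (k+1) = (i+k) + 1 := by omega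
    rw [h2]
    exact hc.2.2 (i+k) (by omega) hm

lemma aux_rem_good {c : ℕ → V} {n i j : ℕ} (hij : i < j) (hjn : j ≤ n)
    (hc : GoodSeg G Q σp c n) (hcc : c i = c j) :
    GoodSeg G Q σp (fun k => if k ≤ i then c k else c (k + (j-i))) (n - (j-i)) := by
  refine ⟨fun k hk => ?_, fun k hk => ?_, fun k hk hm => ?_⟩
  · show (if k ≤ i then c k else c (k + (j-i))) ∈ Q
    by_cases hki : k ≤ i
    · rw [if_pos hki]; exact hc.1 k (by omega)
    · rw [if_neg hki]; exact hc.1 (k + (j-i)) (by omega)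
  · show G.E (if k ≤ i then c k else c (k + (j-i)))
        (if k + 1 ≤ i then c (k+1) else c (k + 1 + (j-i)))
    by_cases hki : k ≤ i
    · by_cases hki1 : k + 1 ≤ i
      · rw [if_pos hki, if_pos hki1]
        exact hc.2.1 k (by omega)
      · have hk_eq : k = i := by omega
        have h2 : k + 1 + (j - i) = j + 1 := by omega
        rw [if_pos hki, if_neg hki1, h2, hk_eq, hcc]
        exact hc.2.1 j (by omega)
    · have h2 : k + 1 + (j - i) = (k + (j-i)) + 1 := by omega
      rw [if_neg hki, if_neg (by omega : ¬ (k + 1 ≤ i)), h2]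
      exact hc.2.1 (k + (j-i)) (by omega)
  · show (if k + 1 ≤ i then c (k+1) else c (k + 1 + (j-i)))
        = σp (if k ≤ i then c k else c (k + (j-i)))
    have hm' : G.isMax (if k ≤ i then c k else c (k + (j-i))) := hm
    by_cases hki : k ≤ i
    · by_cases hki1 : k + 1 ≤ i
      · rw [if_pos hki] at hm' ⊢
        rw [if_pos hki1]
        exact hc.2.2 k (by omega) hm'
      · have hk_eq : k = i := by omega
        have h2 : k + 1 + (j - i) = j + 1 := by omega
        rw [if_pos hki, hk_eq, hcc] at hm'
        rw [if_neg hki1, h2, if_pos hki, hk_eq, hcc]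
        exact hc.2.2 j (by omega) hm'
    · have h2 : k + 1 + (j - i) = (k + (j-i)) + 1 := by omega
      rw [if_neg hki] at hm' ⊢
      rw [if_neg (by omega : ¬ (k + 1 ≤ i)), h2]
      exact hc.2.2 (k + (j-i)) (by omega) hm'

lemma aux_sum_split {c : ℕ → V} {n i j : ℕ} (hij : i < j) (hjn : j ≤ n)
    (hcc : c i = c j) :
    (∑ k ∈ Finset.range n, G.w (c k)) =
      (∑ k ∈ Finset.range (j-i), G.w (c (i+k))) +
      ∑ k ∈ Finset.range (n-(j-i)), G.w (if k ≤ i then c k else c (k + (j-i))) := by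
  have him : i ≤ n - (j - i) := by omega
  have hseg : ∑ k ∈ Finset.range (j-i), G.w (c (i+k)) = ∑ k ∈ Finset.Ico i j, G.w (c k) := by
    rw [Finset.sum_Ico_eq_sum_range]
  have hrem1 : ∑ k ∈ Finset.range (n-(j-i)), G.w (if k ≤ i then c k else c (k + (j-i)))
      = ∑ k ∈ Finset.Ico 0 i, G.w (c k) + ∑ k ∈ Finset.Ico i (n-(j-i)), G.w (c (k + (j-i))) := by
    rw [Finset.range_eq_Ico, ← Finset.sum_Ico_consecutive _ (Nat.zero_le i) him]
    congr 1
    · refine Finset.sum_congr rfl fun k hk => ?_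
      rw [Finset.mem_Ico] at hk
      rw [if_pos (by omega)]
    · refine Finset.sum_congr rfl fun k hk => ?_
      rw [Finset.mem_Ico] at hk
      by_cases hki : k ≤ i
      · have hk_eq : k = i := by omega
        rw [if_pos hki, hk_eq, hcc]
        congr 2
        omega
      · rw [if_neg hki]
  have hrem2 : ∑ k ∈ Finset.Ico i (n-(j-i)), G.w (c (k + (j-i)))
      = ∑ k ∈ Finset.Ico j n, G.w (c k) := by
    rw [Finset.sum_Ico_eq_sum_range, Finset.sum_Ico_eq_sum_range]
    have hlen : n - (j-i) - i = n - j := by omega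
    rw [hlen]
    refine Finset.sum_congr rfl fun k _ => ?_
    congr 2
    omega
  rw [hseg, hrem1, hrem2, Finset.range_eq_Ico,
    ← Finset.sum_Ico_consecutive (fun k => G.w (c k)) (Nat.zero_le j) (by omega : j ≤ n),
    ← Finset.sum_Ico_consecutive (fun k => G.w (c k)) (Nat.zero_le i) (le_of_lt hij)]
  ring

lemma aux_cycle_pos (h : G.IsWeakQuasiDominion Q σp) :
    ∀ n, 0 < n → ∀ c : ℕ → V, GoodSeg G Q σp c n → c n = c 0 →
      1 ≤ ∑ i ∈ Finset.range n, G.w (c i) := by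
  intro n
  induction n using Nat.strong_induction_on with
  | _ n ih =>
  intro hn c hc hcl
  by_cases hrep : ∃ i j, i < j ∧ j ≤ n ∧ (i ≠ 0 ∨ j ≠ n) ∧ c i = c j
  · obtain ⟨i, j, hij, hjn, hne, hcc⟩ := hrep
    have hdlt : j - i < n := by omega
    have hdpos : 0 < j - i := by omega
    have h1 : 1 ≤ ∑ k ∈ Finset.range (j-i), G.w (c (i+k)) := by
      refine ih (j-i) hdlt hdpos _ (aux_seg_good G Q σp hij hjn hc) ?_
      show c (i + (j - i)) = c (i + 0)
      have hidx : i + (j - i) = j := by omega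
      rw [Nat.add_zero, hidx, ← hcc]
    have h2 : 1 ≤ ∑ k ∈ Finset.range (n-(j-i)),
        G.w (if k ≤ i then c k else c (k + (j-i))) := by
      refine ih (n-(j-i)) (by omega) (by omega) _ (aux_rem_good G Q σp hij hjn hc hcc) ?_
      show (if n - (j-i) ≤ i then c (n - (j-i)) else c (n - (j-i) + (j-i)))
          = (if 0 ≤ i then c 0 else c (0 + (j-i)))
      rw [if_pos (Nat.zero_le i)]
      by_cases hmi : n - (j-i) ≤ i
      · have hieq : n - (j - i) = i := by omega
        have hjeq : j = n := by omega
        rw [if_pos hmi]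
        calc c (n - (j-i)) = c i := by rw [hieq]
          _ = c j := hcc
          _ = c 0 := by rw [hjeq]; exact hcl
      · have hmeq : n - (j-i) + (j-i) = n := by omega
        rw [if_neg hmi, hmeq]
        exact hcl
    have hsum := aux_sum_split G (c := c) hij hjn hcc
    linarith
  · push_neg at hrep
    have hinj : ∀ a b, a < n → b < n → c a = c b → a = b := by
      intro a b ha hb hab
      by_contra hne
      rcases Nat.lt_or_ge a b with hlt | hge
      · exact hrep a b hlt (by omega) (Or.inr (by omega)) hab
      · have hlt : b < a := by omega
        exact hrep b a hlt (by omega) (Or.inr (by omega)) hab.symm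
    classical
    set σm : V → V := fun v =>
      if hv : ∃ i, i < n ∧ c i = v then c (Classical.choose hv + 1)
      else Classical.choose (G.noSink v) with hσm
    have hminstrat : G.IsMinStratOn Q σm := by
      intro q _ _
      by_cases hv : ∃ i, i < n ∧ c i = q
      · rw [hσm]
        simp only [dif_pos hv]
        obtain ⟨hi1, hi2⟩ := Classical.choose_spec hv
        have he := hc.2.1 _ hi1
        rwa [hi2] at he
      · rw [hσm]
        simp only [dif_neg hv]
        exact Classical.choose_spec (G.noSink q)
    have hstep : ∀ k, (G.step σp σm)^[k] (c 0) = c (k % n) := by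
      intro k
      induction k with
      | zero => simp
      | succ k ihk =>
        rw [Function.iterate_succ_apply', ihk]
        have hklt : k % n < n := Nat.mod_lt _ hn
        have hstep1 : G.step σp σm (c (k % n)) = c (k % n + 1) := by
          by_cases hmax : G.isMax (c (k % n))
          · rw [MPG.step, if_pos hmax]
            exact (hc.2.2 _ hklt hmax).symm
          · rw [MPG.step, if_neg hmax, hσm]
            have hv : ∃ i', i' < n ∧ c i' = c (k % n) := ⟨k % n, hklt, rfl⟩
            simp only [dif_pos hv]
            obtain ⟨hj1, hj2⟩ := Classical.choose_spec hv
            rw [hinj _ _ hj1 hklt hj2]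
        rw [hstep1]
        have hmod : (k+1) % n = (k % n + 1) % n := by
          conv_lhs => rw [← Nat.div_add_mod k n]
          rw [Nat.add_assoc, Nat.mul_add_mod]
        rcases Nat.lt_or_ge (k % n + 1) n with hlt | hge
        · rw [hmod, Nat.mod_eq_of_lt hlt]
        · have heq : k % n + 1 = n := by omega
          rw [heq, hcl, hmod, heq, Nat.mod_self]
    have hin : ∀ k, (G.step σp σm)^[k] (c 0) ∈ Q := by
      intro k
      rw [hstep k]
      exact hc.1 _ (le_of_lt (Nat.mod_lt _ hn))
    obtain ⟨N, hN⟩ := h.2 σm hminstrat (c 0) (hc.1 0 (Nat.zero_le n)) hin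
    have hNn : N ≤ (N+1) * n := by
      have := Nat.le_mul_of_pos_right (N+1) hn
      omega
    have hsum := hN ((N+1)*n) hNn
    have hrw : ∑ i ∈ Finset.range ((N+1)*n), G.w ((G.step σp σm)^[i] (c 0))
        = ((N:ℤ)+1) * ∑ i ∈ Finset.range n, G.w (c i) := by
      have hco : ∀ i ∈ Finset.range ((N+1)*n),
          G.w ((G.step σp σm)^[i] (c 0)) = (fun i => G.w (c i)) (i % n) := by
        intro i _
        rw [hstep i]
      rw [Finset.sum_congr rfl hco, aux_periodic_sum (fun i => G.w (c i)) n hn (N+1)]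
      push_cast
      ring
    rw [hrw] at hsum
    by_contra hW
    push_neg at hW
    have hW' : ∑ i ∈ Finset.range n, G.w (c i) ≤ 0 :=
      Int.lt_add_one_iff.mp (by linarith)
    have hN0 : (0:ℤ) ≤ (N:ℤ) := by positivity
    nlinarith [hsum, hW', hN0]

end AuxWQD

lemma aux_walk_bound {V : Type*} [Fintype V] (G : MPG V) (Q : Set V) (σp : V → V)
    (h : G.IsWeakQuasiDominion Q σp) :
    ∀ n, ∀ c : ℕ → V, GoodSeg G Q σp c n →
      (n : ℤ) ≤ (Fintype.card V : ℤ) * (∑ i ∈ Finset.range n, G.w (c i))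
        + (Fintype.card V : ℤ) * (Fintype.card V : ℤ) * (∑ v : V, |G.w v|)
        + (Fintype.card V : ℤ) := by
  classical
  set K : ℤ := (Fintype.card V : ℤ) with hKdef
  set M : ℤ := ∑ v : V, |G.w v| with hMdef
  have hM0 : 0 ≤ M := Finset.sum_nonneg fun v _ => abs_nonneg _
  have hMv : ∀ v : V, -M ≤ G.w v := by
    intro v
    have h1 : |G.w v| ≤ M :=
      Finset.single_le_sum (f := fun v => |G.w v|) (fun v _ => abs_nonneg _) (Finset.mem_univ v)
    have h2 := neg_abs_le (G.w v)
    linarith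
  intro n
  induction n using Nat.strong_induction_on with
  | _ n ih =>
  intro c hc
  by_cases hrep : ∃ j, j ≤ n ∧ ∃ i, i < j ∧ c i = c j
  · have hfind := Nat.find_spec hrep
    set j0 := Nat.find hrep with hj0def
    obtain ⟨hj0n, i, hij0, hcc⟩ := hfind
    have hminf : ∀ b, b < j0 → ¬ (b ≤ n ∧ ∃ i, i < b ∧ c i = c b) :=
      fun b hb => Nat.find_min hrep hb
    have hj0K : (j0 : ℤ) ≤ K := by
      have hinj : Function.Injective (fun a : Fin j0 => c a) := by
        intro a b hab
        by_contra hne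
        have hvne : a.val ≠ b.val := fun hh => hne (Fin.ext hh)
        rcases Nat.lt_or_ge a.val b.val with hlt | hge
        · exact hminf b.val b.isLt ⟨by omega, a.val, hlt, hab⟩
        · have hlt : b.val < a.val := by omega
          exact hminf a.val a.isLt ⟨by omega, b.val, hlt, hab.symm⟩
      have hle := Fintype.card_le_of_injective _ hinj
      rw [Fintype.card_fin] at hle
      rw [hKdef]
      exact_mod_cast hle
    have hdpos : 0 < j0 - i := by omega
    have hWs : 1 ≤ ∑ k ∈ Finset.range (j0-i), G.w (c (i+k)) := by
      refine aux_cycle_pos G Q σp h (j0-i) hdpos _ (aux_seg_good G Q σp hij0 hj0n hc) ?_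
      show c (i + (j0 - i)) = c (i + 0)
      have hidx : i + (j0 - i) = j0 := by omega
      rw [Nat.add_zero, hidx, ← hcc]
    have hrem : ((n - (j0-i) : ℕ) : ℤ) ≤ K * (∑ k ∈ Finset.range (n-(j0-i)),
          G.w (if k ≤ i then c k else c (k + (j0-i)))) + K*K*M + K :=
      ih (n - (j0-i)) (by omega) _ (aux_rem_good G Q σp hij0 hj0n hc hcc)
    have hsum := aux_sum_split G (c := c) hij0 hj0n hcc
    have hK0 : (0:ℤ) ≤ K := le_trans (by positivity) hj0K
    have hcast : ((n - (j0-i) : ℕ) : ℤ) = (n : ℤ) - ((j0:ℤ) - (i:ℤ)) := by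
      have hle1 : j0 - i ≤ n := by omega
      have hle2 : i ≤ j0 := le_of_lt hij0
      push_cast [Nat.cast_sub hle1, Nat.cast_sub hle2]
      ring
    rw [hcast] at hrem
    have hd : ((j0:ℤ) - (i:ℤ)) ≤ K := by
      have hi0 : (0:ℤ) ≤ (i:ℤ) := by positivity
      linarith
    have hKW : K * 1 ≤ K * (∑ k ∈ Finset.range (j0-i), G.w (c (i+k))) :=
      mul_le_mul_of_nonneg_left hWs hK0
    rw [hsum, mul_add]
    linarith
  · push_neg at hrep
    have hinj : Function.Injective (fun a : Fin (n+1) => c a) := by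
      intro a b hab
      by_contra hne
      have hvne : a.val ≠ b.val := fun hh => hne (Fin.ext hh)
      rcases Nat.lt_or_ge a.val b.val with hlt | hge
      · exact hrep b.val (by omega) a.val hlt hab
      · have hlt : b.val < a.val := by omega
        exact hrep a.val (by omega) b.val hlt hab.symm
    have hcard : (n : ℤ) + 1 ≤ K := by
      have hle := Fintype.card_le_of_injective _ hinj
      rw [Fintype.card_fin] at hle
      rw [hKdef]
      exact_mod_cast hle
    have hK0 : (0:ℤ) ≤ K := by
      have : (0:ℤ) ≤ (n:ℤ) := by positivity
      linarith
    have hS : -((n:ℤ) * M) ≤ ∑ i ∈ Finset.range n, G.w (c i) := by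
      have h1 : ∑ _i ∈ Finset.range n, (-M) ≤ ∑ i ∈ Finset.range n, G.w (c i) :=
        Finset.sum_le_sum fun i _ => hMv (c i)
      rw [Finset.sum_const, Finset.card_range, nsmul_eq_mul] at h1
      push_cast at h1
      linarith
    have h1 : K * (-((n:ℤ) * M)) ≤ K * (∑ i ∈ Finset.range n, G.w (c i)) :=
      mul_le_mul_of_nonneg_left hS hK0
    have h2 : 0 ≤ (K - (n:ℤ)) * (K * M + 1) :=
      mul_nonneg (by linarith) (by nlinarith)
    nlinarith [h1, h2]
/-- a weak quasi ⊕-dominion closed under its witness (and under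
all ⊟-moves) is a ⊕-dominion: ⊕ wins the threshold-0 mean-payoff game from
every position of `Q`. -/
theorem closed_weak_quasi_dominion_winning {V : Type*} [Fintype V] (G : MPG V)
    (Q : Set V) (σp : V → V)
    (h : G.IsWeakQuasiDominion Q σp)
    (hclosedMax : ∀ p ∈ Q, G.isMax p → σp p ∈ Q)
    (hclosedMin : ∀ p ∈ Q, ¬ G.isMax p → ∀ u, G.E p u → u ∈ Q) :
    ∀ p ∈ Q, G.MaxWins p := by
  intro p hp
  classical
  refine ⟨fun v => if hv : v ∈ Q ∧ G.isMax v then σp v else Classical.choose (G.noSink v),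
    ?_, ?_⟩
  · intro v _
    by_cases hv : v ∈ Q ∧ G.isMax v
    · simp only [dif_pos hv]; exact h.1 v hv.1 hv.2
    · simp only [dif_neg hv]; exact Classical.choose_spec (G.noSink v)
  · intro π hπ0 hπplay hπmax
    have hQ : ∀ i, π i ∈ Q := by
      intro i
      induction i with
      | zero => rw [hπ0]; exact hp
      | succ i ihi =>
        by_cases hm : G.isMax (π i)
        · rw [hπmax i hm]
          simp only [dif_pos (⟨ihi, hm⟩ : π i ∈ Q ∧ G.isMax (π i))]
          exact hclosedMax _ ihi hm
        · exact hclosedMin _ ihi hm _ (hπplay i)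
    have hgood : ∀ n, GoodSeg G Q σp π n := fun n =>
      ⟨fun i _ => hQ i, fun i _ => hπplay i, fun i _ hm => by
        rw [hπmax i hm]
        simp only [dif_pos (⟨hQ i, hm⟩ : π i ∈ Q ∧ G.isMax (π i))]⟩
    set K : ℤ := (Fintype.card V : ℤ) with hKdef
    set M : ℤ := ∑ v : V, |G.w v| with hMdef
    have hV : Nonempty V := ⟨p⟩
    have hK1 : 1 ≤ K := by
      rw [hKdef]
      exact_mod_cast Fintype.card_pos
    have hM0 : 0 ≤ M := Finset.sum_nonneg fun v _ => abs_nonneg _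
    have hbound : ∀ n : ℕ, (n:ℤ) ≤ K * (∑ i ∈ Finset.range n, G.w (π i)) + (K*K*M + K) := by
      intro n
      have hb := aux_walk_bound G Q σp h n π (hgood n)
      rw [← hKdef, ← hMdef] at hb
      linarith
    set B : ℤ := K*K*M + K with hBdef
    have hB1 : 1 ≤ B := by nlinarith
    set u : ℕ → ℝ := fun n : ℕ =>
      ((∑ j ∈ Finset.range n, G.w (π j) : ℤ) : ℝ) / n with hudef
    have hbig : ∀ᶠ (n : ℕ) in atTop, (1:ℝ)/(2*(K:ℝ)) ≤ u n := by
      rw [Filter.eventually_atTop]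
      refine ⟨(2*B).toNat + 1, fun n hn => ?_⟩
      have h0 : ((2*B).toNat : ℤ) = 2*B := Int.toNat_of_nonneg (by linarith)
      have hn' : 2*B + 1 ≤ (n:ℤ) := by
        have hcast : (((2*B).toNat + 1 : ℕ) : ℤ) ≤ (n:ℤ) := Nat.cast_le.mpr hn
        push_cast at hcast
        rw [Int.toNat_of_nonneg (by linarith : (0:ℤ) ≤ 2*B)] at hcast
        linarith
      have hnpos : (0:ℤ) < (n:ℤ) := by linarith
      have hb := hbound n
      have hkey : (n:ℤ) ≤ 2*K*(∑ i ∈ Finset.range n, G.w (π i)) := by nlinarith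
      have hnR : (0:ℝ) < (n:ℝ) := by exact_mod_cast hnpos
      have hKR : (0:ℝ) < 2*(K:ℝ) := by
        have : (0:ℤ) < K := by linarith
        have : (0:ℝ) < (K:ℝ) := by exact_mod_cast this
        linarith
      rw [hudef]
      simp only
      rw [div_le_div_iff₀ hKR hnR]
      have hkeyR : ((n:ℤ):ℝ) ≤ ((2*K*(∑ i ∈ Finset.range n, G.w (π i)) : ℤ) : ℝ) :=
        Int.cast_le.mpr hkey
      push_cast at hkeyR ⊢
      linarith
    have hub : ∀ n : ℕ, u n ≤ (M:ℝ) := by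
      intro n
      rcases Nat.eq_zero_or_pos n with h0 | hpos
      · rw [hudef]
        simp only [h0]
        simp
        exact_mod_cast hM0
      · have hSn : (∑ j ∈ Finset.range n, G.w (π j)) ≤ (n:ℤ) * M := by
          have h1 : ∑ j ∈ Finset.range n, G.w (π j) ≤ ∑ _j ∈ Finset.range n, M := by
            refine Finset.sum_le_sum fun j _ => ?_
            have h2 : |G.w (π j)| ≤ M := Finset.single_le_sum
              (f := fun v => |G.w v|) (fun v _ => abs_nonneg _) (Finset.mem_univ (π j))
            have h3 := le_abs_self (G.w (π j))
            linarith
          rw [Finset.sum_const, Finset.card_range, nsmul_eq_mul] at h1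
          push_cast at h1 ⊢
          linarith
        have hnR : (0:ℝ) < (n:ℝ) := by exact_mod_cast hpos
        rw [hudef]
        simp only
        rw [div_le_iff₀ hnR]
        have : ((∑ j ∈ Finset.range n, G.w (π j) : ℤ) : ℝ) ≤ (((n:ℤ) * M : ℤ) : ℝ) :=
          Int.cast_le.mpr hSn
        push_cast at this ⊢
        linarith
    have hcobound : Filter.IsCoboundedUnder (· ≥ ·) Filter.atTop u :=
      Filter.IsBoundedUnder.isCoboundedUnder_ge
        (Filter.isBoundedUnder_of ⟨(M:ℝ), hub⟩)
    have hlim : (1:ℝ)/(2*(K:ℝ)) ≤ Filter.liminf u atTop :=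
      Filter.le_liminf_of_le hcobound hbig
    have hpos : (0:ℝ) < (1:ℝ)/(2*(K:ℝ)) := by
      have : (0:ℤ) < K := by linarith
      have hKR : (0:ℝ) < (K:ℝ) := by exact_mod_cast this
      positivity
    calc (0:ℝ) < (1:ℝ)/(2*(K:ℝ)) := hpos
      _ ≤ _ := hlim
end

section
/- Let μ be a progress measure on a mean-payoff game and let S be the sum of all positive weights in the game. If μ(p) ≤ S for some position p, then along any path p_0 = p, p_1, p_2, … with μ(p_{i+1}) + p_i ≤ μ(p_i) for all i, there is no index pair h < h+k with p_h = p_{h+k} and strictly positive total weight of the cycle p_h, …, p_{h+k-1}; i.e., no positive-weight cycle is reachable along such a path. -/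
open Filter

variable {V : Type*}

/-- no strictly positive-weight cycle is reachable along a
progress path starting from a position with measure at most `S`, the sum of
all positive weights. -/
theorem no_positive_cycle_reachable {V : Type*} [Fintype V] (G : MPG V)
    (μ : V → ℕ∞) (hpm : G.IsProgressMeasure μ) (p : V)
    (hS : μ p ≤ ((∑ v : V, (G.w v).toNat : ℕ) : ℕ∞))
    (π : ℕ → V) (hp0 : π 0 = p) (hplay : G.IsPlay π)
    (hstep : ∀ i, stretch (μ (π (i + 1))) (G.w (π i)) ≤ μ (π i)) :
    ∀ h k : ℕ, 0 < k → π h = π (h + k) →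
      ¬ (0 < ∑ i ∈ Finset.Ico h (h + k), G.w (π i)) := by

  -- finiteness of μ along the path
  have hfin : ∀ i, μ (π i) ≠ ⊤ := by
    intro i
    induction i with
    | zero =>
      rw [hp0]
      exact ne_top_of_le_ne_top (ENat.coe_ne_top _) hS
    | succ n ih =>
      intro h
      have := hstep n
      rw [stretch, if_pos h] at this
      exact ih (top_le_iff.mp this)
  -- the key integer inequality
  have key : ∀ i, ((μ (π (i+1))).toNat : ℤ) + G.w (π i) ≤ ((μ (π i)).toNat : ℤ) := by
    intro i
    have hs := hstep i
    rw [stretch, if_neg (hfin (i+1))] at hs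
    have h2 : ((((μ (π (i+1))).toNat : ℤ) + G.w (π i)).toNat : ℕ) ≤ (μ (π i)).toNat := by
      have := (ENat.coe_toNat (hfin i)) ▸ hs
      exact_mod_cast this
    calc ((μ (π (i+1))).toNat : ℤ) + G.w (π i)
        ≤ ((((μ (π (i+1))).toNat : ℤ) + G.w (π i)).toNat : ℤ) := Int.self_le_toNat _
      _ ≤ ((μ (π i)).toNat : ℤ) := by exact_mod_cast h2
  -- telescoping
  have tel : ∀ a b : ℕ, a ≤ b →
      ((μ (π b)).toNat : ℤ) + ∑ i ∈ Finset.Ico a b, G.w (π i) ≤ ((μ (π a)).toNat : ℤ) := by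
    intro a b hab
    induction b with
    | zero =>
      obtain rfl : a = 0 := Nat.le_zero.mp hab
      simp
    | succ n ih =>
      rcases Nat.lt_or_ge a (n+1) with hlt | hge
      · have han : a ≤ n := Nat.lt_succ_iff.mp hlt
        rw [Finset.sum_Ico_succ_top han]
        have := key n
        have := ih han
        linarith
      · obtain rfl : a = n + 1 := le_antisymm hab hge
        simp
  intro h k hk hcyc hpos
  have := tel h (h + k) (Nat.le_add_right _ _)
  rw [← hcyc] at this
  linarith
end

section
/- In a mean-payoff game, if from position p player ⊕ has a positional strategy forcing, against every positional ⊟-strategy, a play whose every suffix starting at some occurrence of a repeated position yields a simple cycle of strictly positive weight, then the mean payoff liminf_{i→∞}(1/i)·w(π_{≤i}) of every consistent play π from p is strictly positive. -/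
open Filter

variable {V : Type*}

/-- if a positional ⊕-strategy forces, against every positional
⊟-strategy, plays all of whose simple cycles (segments between two occurrences
of a repeated position, with distinct intermediate positions) have strictly
positive weight, then every consistent play has strictly positive mean payoff. -/
theorem positive_cycles_positive_mean_payoff {V : Type*} [Fintype V]
    (G : MPG V) (p : V) (σ : V → V)
    (hσ : ∀ v, G.isMax v → G.E v (σ v))
    (hcyc : ∀ σm : V → V, (∀ v, ¬ G.isMax v → G.E v (σm v)) →
      ∀ h k : ℕ, 0 < k →
        (G.step σ σm)^[h] p = (G.step σ σm)^[h + k] p →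
        (∀ i ∈ Finset.Ico h (h + k), ∀ j ∈ Finset.Ico h (h + k), i ≠ j →
          (G.step σ σm)^[i] p ≠ (G.step σ σm)^[j] p) →
        0 < ∑ i ∈ Finset.Ico h (h + k), G.w ((G.step σ σm)^[i] p)) :
    ∀ σm : V → V, (∀ v, ¬ G.isMax v → G.E v (σm v)) →
      0 < Filter.liminf
        (fun n : ℕ => ((∑ i ∈ Finset.range n, G.w ((G.step σ σm)^[i] p) : ℤ) : ℝ) / n)
        atTop := by
  intro σm hσm
  classical
  set f := G.step σ σm with hf
  set o : ℕ → V := fun n => f^[n] p with ho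
  have hrep : ∃ n : ℕ, ∃ m < n, o m = o n := by
    obtain ⟨a, b, hab, heq⟩ := Finite.exists_ne_map_eq_of_infinite o
    rcases Nat.lt_or_ge a b with hlt | hge
    · exact ⟨b, a, hlt, heq⟩
    · exact ⟨a, b, lt_of_le_of_ne hge (Ne.symm hab), heq.symm⟩
  set N := Nat.find hrep with hN
  obtain ⟨h, hhN, hoN⟩ := Nat.find_spec hrep
  set k := N - h with hk
  have hkpos : 0 < k := Nat.sub_pos_of_lt hhN
  have hhk : h + k = N := by omega
  have hdist : ∀ i ∈ Finset.Ico h (h + k), ∀ j ∈ Finset.Ico h (h + k), i ≠ j →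
      o i ≠ o j := by
    intro i hi j hj hij hoij
    rw [hhk] at hi hj
    simp only [Finset.mem_Ico] at hi hj
    rcases Nat.lt_or_ge i j with hlt | hge
    · exact Nat.find_min hrep (m := j) hj.2 ⟨i, hlt, hoij⟩
    · have hlt : j < i := lt_of_le_of_ne hge (Ne.symm hij)
      exact Nat.find_min hrep (m := i) hi.2 ⟨j, hlt, hoij.symm⟩
  have hC0 : 0 < ∑ i ∈ Finset.Ico h (h + k), G.w (o i) := by
    apply hcyc σm hσm h k hkpos _ hdist
    rw [hhk]; exact hoN
  have hper : ∀ m, o (h + m + k) = o (h + m) := by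
    intro m
    induction m with
    | zero => simpa [hhk] using hoN.symm
    | succ m ih =>
      have e1 : h + (m + 1) + k = (h + m + k) + 1 := by omega
      have e2 : h + (m + 1) = (h + m) + 1 := by omega
      rw [e1, e2]
      simp only [ho, Function.iterate_succ_apply']
      rw [show f^[h + m + k] p = o (h + m + k) from rfl,
        show f^[h + m] p = o (h + m) from rfl, ih]
  set g : ℕ → ℤ := fun m => G.w (o (h + m)) with hg
  have hgper : ∀ m, g (m + k) = g m := by
    intro m; simp only [hg]; rw [← add_assoc, hper]
  have hgq : ∀ q i, g (q * k + i) = g i := by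
    intro q
    induction q with
    | zero => simp
    | succ q ih =>
      intro i
      have e : (q + 1) * k + i = (q * k + i) + k := by ring
      rw [e, hgper, ih]
  set C : ℤ := ∑ i ∈ Finset.range k, g i with hCdef
  have hCeq : C = ∑ i ∈ Finset.Ico h (h + k), G.w (o i) := by
    rw [Finset.sum_Ico_eq_sum_range]
    simp [hCdef, hg]
  have hC1 : 1 ≤ C := by rw [hCeq]; exact hC0
  have hsum_q : ∀ q, ∑ i ∈ Finset.range (k * q), g i = q * C := by
    intro q
    induction q with
    | zero => simp
    | succ q ih =>
      have e : k * (q + 1) = k * q + k := by ring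
      rw [e, Finset.sum_range_add, ih]
      have e2 : ∑ i ∈ Finset.range k, g (k * q + i) = C := by
        refine Finset.sum_congr rfl fun i _ => ?_
        rw [mul_comm k q, hgq]
      rw [e2]; push_cast; ring
  have hsum_g : ∀ m, ∑ i ∈ Finset.range m, g i
      = ((m / k : ℕ) : ℤ) * C + ∑ i ∈ Finset.range (m % k), g i := by
    intro m
    conv_lhs => rw [← Nat.div_add_mod m k]
    rw [Finset.sum_range_add, hsum_q]
    congr 1
    refine Finset.sum_congr rfl fun i _ => ?_
    rw [mul_comm k (m / k), hgq]
  set A : ℤ := ∑ i ∈ Finset.range h, G.w (o i) with hA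
  set S : ℕ → ℤ := fun n => ∑ i ∈ Finset.range n, G.w (o i) with hS
  have hSsplit : ∀ m, S (h + m) = A + ∑ i ∈ Finset.range m, g i := by
    intro m
    simp only [hS, hA, Finset.sum_range_add, hg]
  set B : ℤ := (∑ i ∈ Finset.range h, |G.w (o i)|) + ∑ i ∈ Finset.range k, |g i| with hB
  have hBnn : 0 ≤ B := by positivity
  have hAT : ∀ r < k, -B ≤ A + ∑ i ∈ Finset.range r, g i := by
    intro r hr
    have h1 : |A| ≤ ∑ i ∈ Finset.range h, |G.w (o i)| := Finset.abs_sum_le_sum_abs _ _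
    have h2 : |∑ i ∈ Finset.range r, g i| ≤ ∑ i ∈ Finset.range k, |g i| := by
      calc |∑ i ∈ Finset.range r, g i| ≤ ∑ i ∈ Finset.range r, |g i| :=
            Finset.abs_sum_le_sum_abs _ _
        _ ≤ ∑ i ∈ Finset.range k, |g i| := by
            apply Finset.sum_le_sum_of_subset_of_nonneg
            · exact Finset.range_subset_range.2 hr.le
            · intro i _ _; positivity
    have h1' := abs_le.1 h1
    have h2' := abs_le.1 h2
    simp only [hB]; linarith [h1'.1, h2'.1]
  have hlow : ∀ n, h ≤ n → (((n - h) / k : ℕ) : ℤ) - B ≤ S n := by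
    intro n hn
    have e : S n = A + ∑ i ∈ Finset.range (n - h), g i := by
      have : n = h + (n - h) := by omega
      rw [this, hSsplit]
      simp
    rw [e, hsum_g]
    have hq0 : (0:ℤ) ≤ (((n - h) / k : ℕ) : ℤ) := by positivity
    have hqC : (((n - h) / k : ℕ) : ℤ) * 1 ≤ (((n - h) / k : ℕ) : ℤ) * C :=
      mul_le_mul_of_nonneg_left hC1 hq0
    have := hAT ((n - h) % k) (Nat.mod_lt _ hkpos)
    linarith
  have hev : ∀ᶠ n : ℕ in atTop,
      (1 : ℝ) / (2 * k) ≤ ((∑ i ∈ Finset.range n, G.w (f^[i] p) : ℤ) : ℝ) / n := by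
    rw [eventually_atTop]
    refine ⟨2 * h + 2 * k + 2 * k * B.toNat + 1, fun n hn => ?_⟩
    have hnh : h ≤ n := by omega
    have hq := hlow n hnh
    have hkq : n - h < k * ((n - h) / k) + k := by
      have h1 := Nat.div_add_mod (n - h) k
      have h2 := Nat.mod_lt (n - h) hkpos
      omega
    have hZ : (n : ℤ) ≤ 2 * k * S n := by
      have h1 : ((n - h : ℕ) : ℤ) < (k : ℤ) * (((n - h) / k : ℕ) : ℤ) + (k : ℤ) := by
        rw [← Nat.cast_mul]; exact_mod_cast hkq
      rw [Nat.cast_sub hnh] at h1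
      have hBt : B = (B.toNat : ℤ) := (Int.toNat_of_nonneg hBnn).symm
      have hn' : (2 * (h : ℤ) + 2 * k + 2 * k * B.toNat + 1 : ℤ) ≤ n := by exact_mod_cast hn
      have hk1 : (1 : ℤ) ≤ k := by exact_mod_cast hkpos
      nlinarith [hq, h1]
    have hnpos : (0 : ℝ) < n := by
      have : 0 < n := by omega
      exact_mod_cast this
    have hkR : (0 : ℝ) < 2 * k := by
      have : (0:ℝ) < (k:ℝ) := by exact_mod_cast hkpos
      linarith
    rw [div_le_div_iff₀ hkR hnpos]
    have hZR : ((n : ℤ) : ℝ) ≤ ((2 * k * S n : ℤ) : ℝ) := by exact_mod_cast hZ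
    have hSeq : S n = ∑ i ∈ Finset.range n, G.w (f^[i] p) := rfl
    rw [hSeq] at hZR
    push_cast at hZR ⊢
    nlinarith [hZR]
  have hpos : (0 : ℝ) < 1 / (2 * k) := by
    have : (0:ℝ) < (k:ℝ) := by exact_mod_cast hkpos
    positivity
  set M : ℤ := ∑ v : V, |G.w v| with hM
  have hMv : ∀ v, G.w v ≤ M := by
    intro v
    calc G.w v ≤ |G.w v| := le_abs_self _
      _ ≤ M := Finset.single_le_sum (fun u _ => abs_nonneg (G.w u)) (Finset.mem_univ v)
  have hMnn : (0:ℤ) ≤ M := Finset.sum_nonneg fun u _ => abs_nonneg _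
  have hub : ∀ n : ℕ, ((∑ i ∈ Finset.range n, G.w (f^[i] p) : ℤ) : ℝ) / n ≤ (M : ℝ) := by
    intro n
    rcases Nat.eq_zero_or_pos n with rfl | hn
    · simp; exact_mod_cast hMnn
    · have hSle : (∑ i ∈ Finset.range n, G.w (f^[i] p) : ℤ) ≤ n * M := by
        calc (∑ i ∈ Finset.range n, G.w (f^[i] p) : ℤ)
            ≤ ∑ i ∈ Finset.range n, M := Finset.sum_le_sum fun i _ => hMv _
          _ = n * M := by rw [Finset.sum_const, Finset.card_range]; push_cast; ring
      have hnpos : (0:ℝ) < n := by exact_mod_cast hn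
      rw [div_le_iff₀ hnpos]
      calc ((∑ i ∈ Finset.range n, G.w (f^[i] p) : ℤ) : ℝ) ≤ ((n * M : ℤ) : ℝ) := by
            exact_mod_cast hSle
        _ = (M:ℝ) * n := by push_cast; ring
  refine lt_of_lt_of_le hpos (le_liminf_of_le ?_ hev)
  exact isCoboundedUnder_ge_of_le atTop hub
end
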